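/- Let ℓ > 0, N > 0, and let φ : [0,ℓ]×[−N,N] → ℝ be twice continuously differentiable and satisfy: (i) ∂²φ/∂s² + ∂²φ/∂z² + 2cosh⁻²(s)φ = 0 on [0,ℓ]×[−N,N]; (ii) the Dirichlet condition φ(0,z) = 0 for all z; (iii) the Robin condition ∂_sφ(ℓ,z)·tanh(ℓ) − φ(ℓ,z)·cosh⁻²(ℓ) = 0 for all z ∈ [−N,N]; (iv) the Neumann condition ∂_zφ(s,±N) = 0 for all s ∈ [0,ℓ]. Then there is a constant c ∈ ℝ such that φ(s,z) = c·tanh(s) for all (s,z). -/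

import Mathlib

/-!
`tanh` is a positive solution of `u'' + 2 cosh⁻² u = 0` on `(0, ℓ]`, so the ground-state
substitution `φ = ψ tanh` applies: with `p = tanh' / tanh`, the vector field
`(φ φ_s - p φ², φ φ_z)` has divergence `(φ_s - p φ)² + φ_z² + φ L̃φ`. Integrating over
`[ε, ℓ] × [-N, N]`, the Robin and Neumann conditions remove the flux through three sides, and the
Dirichlet condition makes the flux through `s = ε` of order `ε`. Hence the nonnegative density
`(φ_s - p φ)² + φ_z²` vanishes, so `φ / tanh` has zero gradient on the open strip and is
constant; continuity extends `φ = c tanh` to the closed strip.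
-/

open Real Set MeasureTheory Filter Topology

section PartialDeriv

variable {E : Type*} [NormedAddCommGroup E] [NormedSpace ℝ E] {f : ℝ × ℝ → E} {x : ℝ × ℝ}

noncomputable def partialFst (f : ℝ × ℝ → E) (x : ℝ × ℝ) : E := fderiv ℝ f x (1, 0)

noncomputable def partialSnd (f : ℝ × ℝ → E) (x : ℝ × ℝ) : E := fderiv ℝ f x (0, 1)

theorem DifferentiableAt.hasDerivAt_partialFst (hf : DifferentiableAt ℝ f x) :
    HasDerivAt (fun s => f (s, x.2)) (partialFst f x) x.1 :=
  hf.hasFDerivAt.comp_hasDerivAt x.1 ((hasDerivAt_id x.1).prodMk (hasDerivAt_const x.1 x.2))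

theorem DifferentiableAt.hasDerivAt_partialSnd (hf : DifferentiableAt ℝ f x) :
    HasDerivAt (fun z => f (x.1, z)) (partialSnd f x) x.2 :=
  hf.hasFDerivAt.comp_hasDerivAt x.2 ((hasDerivAt_const x.2 x.1).prodMk (hasDerivAt_id x.2))

theorem partialFst_eq_of_hasDerivAt {e : E} (hf : DifferentiableAt ℝ f x)
    (he : HasDerivAt (fun s => f (s, x.2)) e x.1) : partialFst f x = e :=
  hf.hasDerivAt_partialFst.unique he

theorem partialSnd_eq_of_hasDerivAt {e : E} (hf : DifferentiableAt ℝ f x)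
    (he : HasDerivAt (fun z => f (x.1, z)) e x.2) : partialSnd f x = e :=
  hf.hasDerivAt_partialSnd.unique he

theorem deriv_fst_eq_partialFst (hf : Differentiable ℝ f) (s z : ℝ) :
    deriv (fun s' => f (s', z)) s = partialFst f (s, z) :=
  (hf (s, z)).hasDerivAt_partialFst.deriv

theorem deriv_snd_eq_partialSnd (hf : Differentiable ℝ f) (s z : ℝ) :
    deriv (fun z' => f (s, z')) z = partialSnd f (s, z) :=
  (hf (s, z)).hasDerivAt_partialSnd.deriv

theorem fderiv_eq_zero_of_partialFst_of_partialSnd (hs : partialFst f x = 0)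
    (hz : partialSnd f x = 0) : fderiv ℝ f x = 0 :=
  ContinuousLinearMap.prod_ext (ContinuousLinearMap.ext_ring hs)
    (ContinuousLinearMap.ext_ring hz)

theorem ContDiff.partialFst {n : WithTop ℕ∞} (hf : ContDiff ℝ (n + 1) f) :
    ContDiff ℝ n (partialFst f) :=
  (hf.fderiv_right le_rfl).clm_apply contDiff_const

theorem ContDiff.partialSnd {n : WithTop ℕ∞} (hf : ContDiff ℝ (n + 1) f) :
    ContDiff ℝ n (partialSnd f) :=
  (hf.fderiv_right le_rfl).clm_apply contDiff_const

end PartialDeriv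

namespace Real

theorem hasDerivAt_tanh (x : ℝ) : HasDerivAt tanh (cosh x ^ 2)⁻¹ x := by
  have h := (hasDerivAt_sinh x).div (hasDerivAt_cosh x) (cosh_pos x).ne'
  rw [show sinh / cosh = tanh from funext fun y => (tanh_eq_sinh_div_cosh y).symm] at h
  refine h.congr_deriv ?_
  field_simp
  linear_combination cosh_sq_sub_sinh_sq x

theorem continuous_tanh : Continuous tanh :=
  continuous_iff_continuousAt.2 fun x => (hasDerivAt_tanh x).continuousAt

theorem tanh_ne_zero {x : ℝ} (hx : x ≠ 0) : tanh x ≠ 0 := by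
  rw [tanh_eq_sinh_div_cosh]
  exact div_ne_zero (sinh_ne_zero.2 hx) (cosh_pos x).ne'

end Real

/-- The logarithmic derivative `tanh' / tanh` of `tanh`. -/
noncomputable def tanhLogDeriv (s : ℝ) : ℝ := (sinh s * cosh s)⁻¹

theorem tanh_mul_tanhLogDeriv {s : ℝ} (hs : s ≠ 0) : tanh s * tanhLogDeriv s = (cosh s ^ 2)⁻¹ := by
  have := sinh_ne_zero.2 hs
  have := (cosh_pos s).ne'
  rw [tanhLogDeriv, tanh_eq_sinh_div_cosh]
  field_simp

theorem hasDerivAt_tanhLogDeriv {s : ℝ} (hs : s ≠ 0) :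
    HasDerivAt tanhLogDeriv (-(2 * (cosh s ^ 2)⁻¹) - tanhLogDeriv s ^ 2) s := by
  have hsinh := sinh_ne_zero.2 hs
  have hcosh := (cosh_pos s).ne'
  refine (((hasDerivAt_sinh s).mul (hasDerivAt_cosh s)).inv (mul_ne_zero hsinh hcosh)).congr_deriv
    ?_
  simp only [tanhLogDeriv, Pi.mul_apply]
  field_simp
  linear_combination -cosh_sq s

theorem mul_tanhLogDeriv_le_one {s : ℝ} (hs : 0 < s) : s * tanhLogDeriv s ≤ 1 := by
  have hsinh : s ≤ sinh s := self_le_sinh_iff.2 hs.le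
  rw [tanhLogDeriv, ← div_eq_mul_inv, div_le_one (by positivity)]
  nlinarith [one_le_cosh s]

theorem tanhLogDeriv_pos {s : ℝ} (hs : 0 < s) : 0 < tanhLogDeriv s := by
  have := sinh_pos_iff.2 hs
  unfold tanhLogDeriv
  positivity

section Energy

variable {φ : ℝ × ℝ → ℝ} {x : ℝ × ℝ} {ε ℓ a b : ℝ}

noncomputable def Ltilde (φ : ℝ × ℝ → ℝ) (x : ℝ × ℝ) : ℝ :=
  partialFst (partialFst φ) x + partialSnd (partialSnd φ) x + 2 * (cosh x.1 ^ 2)⁻¹ * φ x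

noncomputable def fluxFst (φ : ℝ × ℝ → ℝ) (x : ℝ × ℝ) : ℝ :=
  φ x * (partialFst φ x - tanhLogDeriv x.1 * φ x)

noncomputable def fluxSnd (φ : ℝ × ℝ → ℝ) (x : ℝ × ℝ) : ℝ := φ x * partialSnd φ x

noncomputable def energyDensity (φ : ℝ × ℝ → ℝ) (x : ℝ × ℝ) : ℝ :=
  (partialFst φ x - tanhLogDeriv x.1 * φ x) ^ 2 + partialSnd φ x ^ 2

theorem energyDensity_nonneg (φ : ℝ × ℝ → ℝ) (x : ℝ × ℝ) : 0 ≤ energyDensity φ x := by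
  unfold energyDensity
  positivity

theorem differentiableAt_tanhLogDeriv {s : ℝ} (hs : s ≠ 0) : DifferentiableAt ℝ tanhLogDeriv s :=
  (hasDerivAt_tanhLogDeriv hs).differentiableAt

theorem differentiableAt_fluxFst (hφ : ContDiff ℝ 2 φ) (hx : x.1 ≠ 0) :
    DifferentiableAt ℝ (fluxFst φ) x := by
  have h1 : Differentiable ℝ φ := hφ.differentiable two_ne_zero
  have h2 : Differentiable ℝ (partialFst φ) := (hφ.partialFst (n := 1)).differentiable one_ne_zero
  have h3 := (differentiableAt_tanhLogDeriv hx).comp x differentiableAt_fst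
  unfold fluxFst
  fun_prop

theorem continuousOn_energyDensity (hφ : ContDiff ℝ 1 φ) :
    ContinuousOn (energyDensity φ) {x | x.1 ≠ 0} := by
  have h1 : Continuous φ := hφ.continuous
  have h2 : Continuous (partialFst φ) := (hφ.partialFst (n := 0)).continuous
  have h3 : Continuous (partialSnd φ) := (hφ.partialSnd (n := 0)).continuous
  have h4 : ContinuousOn (fun x : ℝ × ℝ => tanhLogDeriv x.1) {x | x.1 ≠ 0} := fun x hx =>
    ((differentiableAt_tanhLogDeriv hx).continuousAt.comp
      continuous_fst.continuousAt).continuousWithinAt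
  unfold energyDensity
  fun_prop

theorem partialFst_fluxFst_add_partialSnd_fluxSnd (hφ : ContDiff ℝ 2 φ) (hx : x.1 ≠ 0) :
    partialFst (fluxFst φ) x + partialSnd (fluxSnd φ) x = energyDensity φ x + φ x * Ltilde φ x := by
  have h1 : Differentiable ℝ φ := hφ.differentiable two_ne_zero
  have h2 : Differentiable ℝ (partialFst φ) := (hφ.partialFst (n := 1)).differentiable one_ne_zero
  have h3 : Differentiable ℝ (partialSnd φ) := (hφ.partialSnd (n := 1)).differentiable one_ne_zero
  have hs : partialFst (fluxFst φ) x = _ := partialFst_eq_of_hasDerivAt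
    (differentiableAt_fluxFst hφ hx)
    ((h1 x).hasDerivAt_partialFst.mul
      ((h2 x).hasDerivAt_partialFst.sub
        ((hasDerivAt_tanhLogDeriv hx).mul (h1 x).hasDerivAt_partialFst)))
  have hz : partialSnd (fluxSnd φ) x = _ := partialSnd_eq_of_hasDerivAt
    ((h1 x).mul (h3 x)) ((h1 x).hasDerivAt_partialSnd.mul (h3 x).hasDerivAt_partialSnd)
  rw [hs, hz, energyDensity, Ltilde]
  ring

theorem energyDensity_eq_zero_iff :
    energyDensity φ x = 0 ↔ partialFst φ x = tanhLogDeriv x.1 * φ x ∧ partialSnd φ x = 0 := by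
  rw [energyDensity, add_eq_zero_iff_of_nonneg (sq_nonneg _) (sq_nonneg _), sq_eq_zero_iff,
    sq_eq_zero_iff, sub_eq_zero]

theorem differentiable_fluxSnd (hφ : ContDiff ℝ 2 φ) : Differentiable ℝ (fluxSnd φ) :=
  (hφ.differentiable two_ne_zero).mul ((hφ.partialSnd (n := 1)).differentiable one_ne_zero)

theorem integrableOn_energyDensity (hφ : ContDiff ℝ 1 φ) (hε : 0 < ε) :
    IntegrableOn (energyDensity φ) (Icc ε ℓ ×ˢ Icc a b) :=
  ((continuousOn_energyDensity hφ).mono fun _ hx => (hε.trans_le hx.1.1).ne').integrableOn_compact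
    (isCompact_Icc.prod isCompact_Icc)

theorem fluxFst_eq_zero_of_robin {z : ℝ} (hℓ : ℓ ≠ 0)
    (h : partialFst φ (ℓ, z) * tanh ℓ - φ (ℓ, z) * (cosh ℓ ^ 2)⁻¹ = 0) : fluxFst φ (ℓ, z) = 0 := by
  have : tanh ℓ * (partialFst φ (ℓ, z) - tanhLogDeriv ℓ * φ (ℓ, z)) = 0 := by
    rw [mul_sub, ← mul_assoc, tanh_mul_tanhLogDeriv hℓ]
    linarith
  simp [fluxFst, (mul_eq_zero.1 this).resolve_left (tanh_ne_zero hℓ)]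

theorem abs_fluxFst_le {s z M : ℝ} (hφ : Differentiable ℝ φ) (hs : 0 < s) (h0 : φ (0, z) = 0)
    (hM : ∀ σ ∈ Icc 0 s, |partialFst φ (σ, z)| ≤ M) : |fluxFst φ (s, z)| ≤ 2 * M ^ 2 * s := by
  have hM0 : 0 ≤ M := (abs_nonneg _).trans (hM 0 (left_mem_Icc.2 hs.le))
  have hφs : |φ (s, z)| ≤ M * s := by
    simpa [h0] using norm_image_sub_le_of_norm_deriv_le_segment' (f := fun σ => φ (σ, z))
      (fun σ _ => (hφ (σ, z)).hasDerivAt_partialFst.hasDerivWithinAt)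
      (fun σ hσ => hM σ (Ico_subset_Icc_self hσ)) s (right_mem_Icc.2 hs.le)
  have hp : tanhLogDeriv s * |φ (s, z)| ≤ M := by
    have := mul_tanhLogDeriv_le_one hs
    nlinarith [tanhLogDeriv_pos hs]
  have hdiff : |partialFst φ (s, z) - tanhLogDeriv s * φ (s, z)| ≤ 2 * M := by
    calc _ ≤ |partialFst φ (s, z)| + |tanhLogDeriv s * φ (s, z)| := abs_sub _ _
      _ = |partialFst φ (s, z)| + tanhLogDeriv s * |φ (s, z)| := by
          rw [abs_mul, abs_of_pos (tanhLogDeriv_pos hs)]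
      _ ≤ 2 * M := by linarith [hM s (right_mem_Icc.2 hs.le)]
  rw [fluxFst, abs_mul]
  nlinarith [abs_nonneg (φ (s, z))]

theorem integral_energyDensity_eq (hφ : ContDiff ℝ 2 φ) (hε : 0 < ε) (hεℓ : ε ≤ ℓ)
    (hab : a ≤ b) (hL : ∀ x ∈ Icc ε ℓ ×ˢ Icc a b, Ltilde φ x = 0)
    (hRobin : ∀ z ∈ Icc a b, fluxFst φ (ℓ, z) = 0)
    (hNeumann : ∀ s ∈ Icc ε ℓ, partialSnd φ (s, b) = 0 ∧ partialSnd φ (s, a) = 0) :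
    ∫ x in Icc ε ℓ ×ˢ Icc a b, energyDensity φ x = -∫ z in a..b, fluxFst φ (ε, z) := by
  have hne : ∀ x ∈ Icc ε ℓ ×ˢ Icc a b, x.1 ≠ 0 := fun x hx => (hε.trans_le hx.1.1).ne'
  have hdiv : EqOn (fun x => fderiv ℝ (fluxFst φ) x (1, 0) + fderiv ℝ (fluxSnd φ) x (0, 1))
      (energyDensity φ) (Icc ε ℓ ×ˢ Icc a b) := fun x hx => by
    have := partialFst_fluxFst_add_partialSnd_fluxSnd hφ (hne x hx)
    rwa [hL x hx, mul_zero, add_zero] at this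
  have hGreen := integral_divergence_prod_Icc_of_hasFDerivAt_off_countable_of_le (fluxFst φ)
    (fluxSnd φ) (fderiv ℝ (fluxFst φ)) (fderiv ℝ (fluxSnd φ)) (ε, a) (ℓ, b) ⟨hεℓ, hab⟩ ∅
    countable_empty
    (fun x hx =>
      (differentiableAt_fluxFst hφ (hε.trans_le hx.1.1).ne').continuousAt.continuousWithinAt)
    (differentiable_fluxSnd hφ).continuous.continuousOn
    (fun x hx => (differentiableAt_fluxFst hφ (hε.trans hx.1.1.1).ne').hasFDerivAt)
    (fun x _ => (differentiable_fluxSnd hφ x).hasFDerivAt)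
    (Icc_prod_eq (ε, a) (ℓ, b) ▸ (integrableOn_energyDensity (hφ.of_le one_le_two) hε).congr_fun
      hdiv.symm (measurableSet_Icc.prod measurableSet_Icc))
  have hbottom : ∫ s in ε..ℓ, fluxSnd φ (s, a) = 0 :=
    intervalIntegral.integral_zero_ae <| ae_of_all _ fun s hs => by
      rw [uIoc_of_le hεℓ] at hs
      simp [fluxSnd, (hNeumann s (Ioc_subset_Icc_self hs)).2]
  have htop : ∫ s in ε..ℓ, fluxSnd φ (s, b) = 0 :=
    intervalIntegral.integral_zero_ae <| ae_of_all _ fun s hs => by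
      rw [uIoc_of_le hεℓ] at hs
      simp [fluxSnd, (hNeumann s (Ioc_subset_Icc_self hs)).1]
  have hright : ∫ z in a..b, fluxFst φ (ℓ, z) = 0 :=
    intervalIntegral.integral_zero_ae <| ae_of_all _ fun z hz => by
      rw [uIoc_of_le hab] at hz
      exact hRobin z (Ioc_subset_Icc_self hz)
  rw [Icc_prod_eq, setIntegral_congr_fun (measurableSet_Icc.prod measurableSet_Icc) hdiv] at hGreen
  simp only at hGreen
  rw [hGreen, hbottom, htop, hright]
  ring

theorem integral_energyDensity_eq_zero (hφ : ContDiff ℝ 2 φ) (hε : 0 < ε)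
    (hεℓ : ε ≤ ℓ) (hab : a ≤ b) (hL : ∀ x ∈ Icc 0 ℓ ×ˢ Icc a b, Ltilde φ x = 0)
    (hDirichlet : ∀ z ∈ Icc a b, φ (0, z) = 0) (hRobin : ∀ z ∈ Icc a b, fluxFst φ (ℓ, z) = 0)
    (hNeumann : ∀ s ∈ Icc 0 ℓ, partialSnd φ (s, b) = 0 ∧ partialSnd φ (s, a) = 0) :
    ∫ x in Icc ε ℓ ×ˢ Icc a b, energyDensity φ x = 0 := by
  obtain ⟨M, hM⟩ := (isCompact_Icc.prod isCompact_Icc).exists_bound_of_continuousOn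
    (s := Icc 0 ℓ ×ˢ Icc a b) (hφ.partialFst (n := 1)).continuous.continuousOn
  have hbound : ∀ δ ∈ Ioc 0 ε,
      ∫ x in Icc ε ℓ ×ˢ Icc a b, energyDensity φ x ≤ 2 * M ^ 2 * δ * (b - a) := by
    rintro δ ⟨hδ, hδε⟩
    have hδℓ := hδε.trans hεℓ
    have hsub : Icc δ ℓ ⊆ Icc 0 ℓ := Icc_subset_Icc_left hδ.le
    calc ∫ x in Icc ε ℓ ×ˢ Icc a b, energyDensity φ x
        ≤ ∫ x in Icc δ ℓ ×ˢ Icc a b, energyDensity φ x :=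
          setIntegral_mono_set (integrableOn_energyDensity (hφ.of_le one_le_two) hδ)
            (ae_of_all _ (energyDensity_nonneg φ))
            (Set.prod_mono (Icc_subset_Icc_left hδε) subset_rfl).eventuallyLE
      _ = -∫ z in a..b, fluxFst φ (δ, z) :=
          integral_energyDensity_eq hφ hδ hδℓ hab (fun x hx => hL x ⟨hsub hx.1, hx.2⟩) hRobin
            (fun s hs => hNeumann s (hsub hs))
      _ ≤ ‖∫ z in a..b, fluxFst φ (δ, z)‖ := neg_le_abs _
      _ ≤ 2 * M ^ 2 * δ * |b - a| := intervalIntegral.norm_integral_le_of_norm_le_const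
          fun z hz => by
            rw [uIoc_of_le hab] at hz
            exact abs_fluxFst_le (hφ.differentiable two_ne_zero) hδ
              (hDirichlet z (Ioc_subset_Icc_self hz))
              fun σ hσ => hM _ ⟨⟨hσ.1, hσ.2.trans hδℓ⟩, Ioc_subset_Icc_self hz⟩
      _ = 2 * M ^ 2 * δ * (b - a) := by rw [abs_of_nonneg (sub_nonneg.2 hab)]
  have hlim : Tendsto (fun δ => 2 * M ^ 2 * δ * (b - a)) (𝓝[>] 0) (𝓝 0) :=
    tendsto_nhdsWithin_of_tendsto_nhds <| Continuous.tendsto' (by fun_prop) 0 0 (by simp)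
  refine le_antisymm (ge_of_tendsto hlim ?_)
    (setIntegral_nonneg (measurableSet_Icc.prod measurableSet_Icc)
      fun x _ => energyDensity_nonneg φ x)
  filter_upwards [Ioc_mem_nhdsGT hε] using hbound

theorem eqOn_energyDensity_zero (hφ : ContDiff ℝ 2 φ)
    (hL : ∀ x ∈ Icc 0 ℓ ×ˢ Icc a b, Ltilde φ x = 0) (hDirichlet : ∀ z ∈ Icc a b, φ (0, z) = 0)
    (hRobin : ∀ z ∈ Icc a b, fluxFst φ (ℓ, z) = 0)
    (hNeumann : ∀ s ∈ Icc 0 ℓ, partialSnd φ (s, b) = 0 ∧ partialSnd φ (s, a) = 0) :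
    EqOn (energyDensity φ) 0 (Ioo 0 ℓ ×ˢ Ioo a b) := by
  rintro x ⟨⟨hx0, hxℓ⟩, hxa, hxb⟩
  have hε : 0 < x.1 / 2 := half_pos hx0
  have hzero := integral_energyDensity_eq_zero hφ hε (by linarith) (by linarith) hL hDirichlet
    hRobin hNeumann
  have hae := (setIntegral_eq_zero_iff_of_nonneg_ae (ae_of_all _ (energyDensity_nonneg φ))
    (integrableOn_energyDensity (hφ.of_le one_le_two) hε)).1 hzero
  refine Measure.eqOn_open_of_ae_eq
    (ae_restrict_of_ae_restrict_of_subset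
      (Set.prod_mono Ioo_subset_Icc_self Ioo_subset_Icc_self) hae)
    (isOpen_Ioo.prod isOpen_Ioo)
    ((continuousOn_energyDensity (hφ.of_le one_le_two)).mono fun y hy => (hε.trans hy.1.1).ne')
    continuousOn_const
    ⟨⟨by linarith, hxℓ⟩, hxa, hxb⟩

theorem exists_eqOn_mul_tanh_of_energyDensity_eq_zero {U : Set (ℝ × ℝ)}
    (hφ : Differentiable ℝ φ) (hU : IsOpen U) (hU' : IsPreconnected U) (hU0 : ∀ x ∈ U, x.1 ≠ 0)
    (hE : EqOn (energyDensity φ) 0 U) : ∃ c, EqOn φ (fun x => c * tanh x.1) U := by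
  have hψ : ∀ x ∈ U, DifferentiableAt ℝ (fun y => φ y * (tanh y.1)⁻¹) x := fun x hx =>
    (hφ x).mul ((((hasDerivAt_tanh x.1).differentiableAt.inv (tanh_ne_zero (hU0 x hx)))).comp x
      differentiableAt_fst)
  obtain ⟨c, hc⟩ := hU.exists_is_const_of_fderiv_eq_zero hU'
    (fun x hx => (hψ x hx).differentiableWithinAt) fun x hx => by
      have ht := tanh_ne_zero (hU0 x hx)
      obtain ⟨hs, hz⟩ := energyDensity_eq_zero_iff.1 (hE hx)
      refine fderiv_eq_zero_of_partialFst_of_partialSnd ?_ ?_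
      · rw [partialFst_eq_of_hasDerivAt (hψ x hx)
          ((hφ x).hasDerivAt_partialFst.mul ((hasDerivAt_tanh x.1).inv ht)), hs,
          ← tanh_mul_tanhLogDeriv (hU0 x hx)]
        field_simp
        ring
      · rw [partialSnd_eq_of_hasDerivAt (hψ x hx)
          ((hφ x).hasDerivAt_partialSnd.mul_const (tanh x.1)⁻¹), hz, zero_mul]
  refine ⟨c, fun x hx => ?_⟩
  rw [← hc x hx]
  exact (inv_mul_cancel_right₀ (tanh_ne_zero (hU0 x hx)) _).symm

end Energy

/-- The kernel of `L̃ u = u_ss + u_zz + 2 cosh⁻²(s) u` on the strip `[0,ℓ]×[−N,N]`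
with the Dirichlet condition at `s = 0`, the Robin condition at `s = ℓ` and Neumann
conditions at `z = ±N` is spanned by `tanh(s)`. -/
theorem kernel_with_robin_is_tanh
    (ℓ N : ℝ) (hℓ : 0 < ℓ) (hN : 0 < N)
    (φ : ℝ × ℝ → ℝ) (hφ : ContDiff ℝ 2 φ)
    (hPDE : ∀ s ∈ Set.Icc (0:ℝ) ℓ, ∀ z ∈ Set.Icc (-N) N,
      deriv (fun s' => deriv (fun s'' => φ (s'', z)) s') s
        + deriv (fun z' => deriv (fun z'' => φ (s, z'')) z') z
        + 2 * ((Real.cosh s)^2)⁻¹ * φ (s, z) = 0)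
    (hDirichlet : ∀ z ∈ Set.Icc (-N) N, φ (0, z) = 0)
    (hRobin : ∀ z ∈ Set.Icc (-N) N,
      deriv (fun s' => φ (s', z)) ℓ * Real.tanh ℓ
        - φ (ℓ, z) * ((Real.cosh ℓ)^2)⁻¹ = 0)
    (hNeumann : ∀ s ∈ Set.Icc (0:ℝ) ℓ,
      deriv (fun z' => φ (s, z')) N = 0 ∧ deriv (fun z' => φ (s, z')) (-N) = 0) :
    ∃ c : ℝ, ∀ s ∈ Set.Icc (0:ℝ) ℓ, ∀ z ∈ Set.Icc (-N) N,
      φ (s, z) = c * Real.tanh s := by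
  have hφ₁ : Differentiable ℝ φ := hφ.differentiable two_ne_zero
  have hφs : Differentiable ℝ (partialFst φ) := (hφ.partialFst (n := 1)).differentiable one_ne_zero
  have hφz : Differentiable ℝ (partialSnd φ) := (hφ.partialSnd (n := 1)).differentiable one_ne_zero
  simp only [deriv_fst_eq_partialFst hφ₁, deriv_snd_eq_partialSnd hφ₁,
    deriv_fst_eq_partialFst hφs, deriv_snd_eq_partialSnd hφz] at hPDE hRobin hNeumann
  have hE := eqOn_energyDensity_zero hφ (fun x hx => hPDE x.1 hx.1 x.2 hx.2) hDirichlet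
    (fun z hz => fluxFst_eq_zero_of_robin hℓ.ne' (hRobin z hz)) hNeumann
  obtain ⟨c, hc⟩ := exists_eqOn_mul_tanh_of_energyDensity_eq_zero hφ₁ (isOpen_Ioo.prod isOpen_Ioo)
    ((convex_Ioo 0 ℓ).prod (convex_Ioo (-N) N)).isPreconnected (fun x hx => hx.1.1.ne') hE
  have hclosure : closure (Ioo 0 ℓ ×ˢ Ioo (-N) N) = Icc 0 ℓ ×ˢ Icc (-N) N := by
    rw [closure_prod_eq, closure_Ioo hℓ.ne, closure_Ioo (by linarith)]
  refine ⟨c, fun s hs z hz => ?_⟩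
  exact hc.closure hφ.continuous (continuous_const.mul (continuous_tanh.comp continuous_fst))
    (hclosure ▸ ⟨hs, hz⟩)
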